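/- arXiv:0704.1561 — 2 statements merged into one kernel-verified Lean document; each statement's English description precedes it below -/
import Mathlib

section
/- Let K be a field of characteristic 0, let f_1,…,f_m ∈ K[x_1,…,x_n] be algebraically independent with d_i = deg f_i, let A = K[f_1,…,f_{m−1}], and let G = Σ_i g_i f_m^i with g_i ∈ A. If deg G < (deg_{f_m} G)·d_m, then Ĝ := Σ_{i : deg g_i + i·d_m maximal} ḡ_i f̄_m^i = 0; equivalently, the polynomial h(X) := Σ_{i : deg g_i + i·d_m maximal} ḡ_i X^i ∈ gr(A)[X] lies in the ideal (p(X)) = p(X)·F[X], where p is the minimal polynomial of f̄_m over F = Frac(gr(A)). -/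
open MvPolynomial
noncomputable def leadTerm {K : Type*} [Field K] {n : ℕ} (p : MvPolynomial (Fin n) K) :
    MvPolynomial (Fin n) K :=
  (homogeneousComponent p.totalDegree) p

open Classical in
/-- For a family of coefficients `c i` (lying in `A = K[f₁,…,f_{m−1}]`) of
`G = ∑ i, c i * f_m ^ i`, this is `Ĝ = ∑_{i : deg (c i) + i·d_m maximal} (c i)‾ · f̄_m ^ i`
(substituting `fl = f̄_m`). -/
noncomputable def hatSum {K : Type*} [Field K] {n : ℕ} (dm : ℕ)
    (fl : MvPolynomial (Fin n) K) (c : ℕ → MvPolynomial (Fin n) K) (D : ℕ) :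
    MvPolynomial (Fin n) K :=
  let M := ((Finset.range (D + 1)).filter fun i => c i ≠ 0).sup
    fun i => (c i).totalDegree + i * dm
  ∑ i ∈ (Finset.range (D + 1)).filter
      (fun i => c i ≠ 0 ∧ (c i).totalDegree + i * dm = M),
    leadTerm (c i) * fl ^ i

section Aux
variable {K : Type*} [Field K] {n : ℕ}

lemma leadTerm_ne_zero {p : MvPolynomial (Fin n) K} (hp : p ≠ 0) : leadTerm p ≠ 0 := by
  obtain ⟨d, hd, hdeg⟩ := Finset.exists_mem_eq_sup p.support (support_nonempty.mpr hp)
      (fun s : Fin n →₀ ℕ => s.sum fun _ e => e)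
  intro h
  have hc := coeff_homogeneousComponent (n := p.totalDegree) d (φ := p)
  have h2 : p.totalDegree = d.sum fun _ e => e := hdeg
  have hdd : d.degree = p.totalDegree := by
    rw [h2]; simp [Finsupp.degree, Finsupp.sum]; rfl
  rw [if_pos hdd] at hc
  rw [show (homogeneousComponent p.totalDegree) p = leadTerm p from rfl, h] at hc
  exact (mem_support_iff.mp hd) (by simpa using hc.symm)

lemma totalDegree_leadTerm_le (p : MvPolynomial (Fin n) K) :
    (leadTerm p).totalDegree ≤ p.totalDegree :=
  (homogeneousComponent_isHomogeneous p.totalDegree p).totalDegree_le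

lemma tail_totalDegree_lt {p : MvPolynomial (Fin n) K} (h : p - leadTerm p ≠ 0) :
    (p - leadTerm p).totalDegree < p.totalDegree := by
  have hpos : 0 < p.totalDegree := by
    rcases Nat.eq_zero_or_pos p.totalDegree with h0 | h0
    · exfalso
      apply h
      have hh : p.IsHomogeneous 0 := (totalDegree_zero_iff_isHomogeneous _).mp h0
      rw [leadTerm, h0,
        homogeneousComponent_of_mem ((mem_homogeneousSubmodule _ _).mpr hh), if_pos rfl,
        sub_self]
    · exact h0
  rw [totalDegree, Finset.sup_lt_iff (by simpa using hpos)]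
  intro d hd
  rw [mem_support_iff] at hd
  have hcoeff : coeff d (p - leadTerm p) =
      coeff d p - (if d.degree = p.totalDegree then coeff d p else 0) := by
    rw [coeff_sub, leadTerm, coeff_homogeneousComponent]
  by_cases hdd : d.degree = p.totalDegree
  · rw [hcoeff, if_pos hdd] at hd; simp at hd
  · rw [hcoeff, if_neg hdd] at hd
    simp only [sub_zero] at hd
    have hle : (d.sum fun _ e => e) ≤ p.totalDegree := le_totalDegree (mem_support_iff.mpr hd)
    have : (d.sum fun _ e => e) = d.degree := by
      simp [Finsupp.degree, Finsupp.sum]; rfl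
    omega

lemma hc_mul_zero {N : ℕ} {u v : MvPolynomial (Fin n) K}
    (h : u.totalDegree + v.totalDegree < N) :
    homogeneousComponent N (u * v) = 0 :=
  homogeneousComponent_eq_zero _ _ (lt_of_le_of_lt (totalDegree_mul u v) h)

lemma hc_mul (p q : MvPolynomial (Fin n) K) :
    homogeneousComponent (p.totalDegree + q.totalDegree) (p * q) = leadTerm p * leadTerm q := by
  set a := p.totalDegree with ha
  set b := q.totalDegree with hb
  have hid : p * q = leadTerm p * leadTerm q +
      (leadTerm p * (q - leadTerm q) + ((p - leadTerm p) * leadTerm q +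
        (p - leadTerm p) * (q - leadTerm q))) := by ring
  rw [hid, map_add, map_add, map_add]
  have h1 : homogeneousComponent (a + b) (leadTerm p * leadTerm q) = leadTerm p * leadTerm q := by
    have hh : (leadTerm p * leadTerm q).IsHomogeneous (a + b) :=
      (homogeneousComponent_isHomogeneous a p).mul (homogeneousComponent_isHomogeneous b q)
    rw [homogeneousComponent_of_mem ((mem_homogeneousSubmodule _ _).mpr hh), if_pos rfl]
  have h2 : homogeneousComponent (a + b) (leadTerm p * (q - leadTerm q)) = 0 := by
    by_cases hq : q - leadTerm q = 0
    · rw [hq, mul_zero, map_zero]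
    · exact hc_mul_zero (add_lt_add_of_le_of_lt (totalDegree_leadTerm_le p)
        (tail_totalDegree_lt hq))
  have h3 : homogeneousComponent (a + b) ((p - leadTerm p) * leadTerm q) = 0 := by
    by_cases hp : p - leadTerm p = 0
    · rw [hp, zero_mul, map_zero]
    · exact hc_mul_zero (add_lt_add_of_lt_of_le (tail_totalDegree_lt hp)
        (totalDegree_leadTerm_le q))
  have h4 : homogeneousComponent (a + b) ((p - leadTerm p) * (q - leadTerm q)) = 0 := by
    by_cases hp : p - leadTerm p = 0
    · rw [hp, zero_mul, map_zero]
    · by_cases hq : q - leadTerm q = 0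
      · rw [hq, mul_zero, map_zero]
      · exact hc_mul_zero (add_lt_add_of_lt_of_le (tail_totalDegree_lt hp)
          (le_of_lt (tail_totalDegree_lt hq)))
  rw [h1, h2, h3, h4]; ring

lemma totalDegree_mul_eq {p q : MvPolynomial (Fin n) K} (hp : p ≠ 0) (hq : q ≠ 0) :
    (p * q).totalDegree = p.totalDegree + q.totalDegree := by
  refine le_antisymm (totalDegree_mul p q) ?_
  by_contra hlt
  push_neg at hlt
  have h := hc_mul p q
  rw [homogeneousComponent_eq_zero _ _ hlt] at h
  exact (mul_ne_zero (leadTerm_ne_zero hp) (leadTerm_ne_zero hq)) h.symm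

lemma leadTerm_mul {p q : MvPolynomial (Fin n) K} (hp : p ≠ 0) (hq : q ≠ 0) :
    leadTerm (p * q) = leadTerm p * leadTerm q := by
  rw [leadTerm, totalDegree_mul_eq hp hq]
  exact hc_mul p q

lemma pow_facts {f : MvPolynomial (Fin n) K} (hf : f ≠ 0) (i : ℕ) :
    (f ^ i).totalDegree = i * f.totalDegree ∧ leadTerm (f ^ i) = (leadTerm f) ^ i := by
  induction i with
  | zero =>
    constructor
    · simp
    · simp [leadTerm]
  | succ i ih =>
    have hfi : f ^ i ≠ 0 := pow_ne_zero _ hf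
    constructor
    · rw [pow_succ, totalDegree_mul_eq hfi hf, ih.1]; ring
    · rw [pow_succ, leadTerm_mul hfi hf, ih.2, pow_succ]

end Aux

/-- if `G = ∑ g_i f_m^i` with `g_i ∈ A = K[f₁,…,f_{m−1}]` and
`deg G < (deg_{f_m} G) · d_m`, then `Ĝ = 0`. -/
theorem hat_eq_zero_of_deg_lt {K : Type*} [Field K] [CharZero K] {n m : ℕ}
    (f : Fin (m + 1) → MvPolynomial (Fin n) K) (hf : AlgebraicIndependent K f)
    (g : ℕ → MvPolynomial (Fin n) K)
    (hg : ∀ i, g i ∈ Algebra.adjoin K (Set.range fun j : Fin m => f j.castSucc))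
    (D : ℕ) (hD : g D ≠ 0) (hsupp : ∀ i, D < i → g i = 0)
    (hdeg : (∑ i ∈ Finset.range (D + 1), g i * f (Fin.last m) ^ i).totalDegree <
      D * (f (Fin.last m)).totalDegree) :
    hatSum (f (Fin.last m)).totalDegree (leadTerm (f (Fin.last m))) g D = 0 := by
  classical
  set F := f (Fin.last m) with hF
  set d := F.totalDegree with hd
  have hdpos : 0 < D * d := lt_of_le_of_lt (Nat.zero_le _) hdeg
  have hFne : F ≠ 0 := by
    intro h0
    rw [h0] at hd
    simp [hd] at hdpos
  set M := ((Finset.range (D + 1)).filter fun i => g i ≠ 0).sup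
    (fun i => (g i).totalDegree + i * d) with hM
  have hDmem : D ∈ (Finset.range (D + 1)).filter fun i => g i ≠ 0 := by
    simp [hD]
  have hMge : D * d ≤ M :=
    le_trans (Nat.le_add_left _ _) (Finset.le_sup (f := fun i => (g i).totalDegree + i * d) hDmem)
  have hGM : homogeneousComponent M (∑ i ∈ Finset.range (D + 1), g i * F ^ i) = 0 :=
    homogeneousComponent_eq_zero _ _ (lt_of_lt_of_le hdeg hMge)
  rw [map_sum] at hGM
  have hfilter : ∑ i ∈ (Finset.range (D + 1)).filter
        (fun i => g i ≠ 0 ∧ (g i).totalDegree + i * d = M),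
      homogeneousComponent M (g i * F ^ i)
      = ∑ i ∈ Finset.range (D + 1), homogeneousComponent M (g i * F ^ i) := by
    apply Finset.sum_filter_of_ne
    intro i hi hne
    have hgi : g i ≠ 0 := by
      intro h0
      rw [h0, zero_mul, map_zero] at hne
      exact hne rfl
    refine ⟨hgi, ?_⟩
    have hle : (g i).totalDegree + i * d ≤ M :=
      Finset.le_sup (f := fun i => (g i).totalDegree + i * d)
        (Finset.mem_filter.mpr ⟨hi, hgi⟩)
    rcases lt_or_eq_of_le hle with hlt | heq
    · exfalso
      apply hne
      apply homogeneousComponent_eq_zero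
      case inl => calc (g i * F ^ i).totalDegree ≤ (g i).totalDegree + (F ^ i).totalDegree :=
            totalDegree_mul _ _
        _ ≤ (g i).totalDegree + i * d := by
            exact add_le_add_right (totalDegree_pow F i) _
        _ < M := hlt
    · exact heq
  have hterm : ∀ i ∈ (Finset.range (D + 1)).filter
        (fun i => g i ≠ 0 ∧ (g i).totalDegree + i * d = M),
      homogeneousComponent M (g i * F ^ i) = leadTerm (g i) * (leadTerm F) ^ i := by
    intro i hi
    obtain ⟨_, hgi, hMi⟩ := Finset.mem_filter.mp hi
    obtain ⟨hpd, hpl⟩ := pow_facts hFne i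
    rw [← hMi, ← hpd, hc_mul, hpl]
  have key : hatSum d (leadTerm F) g D
      = ∑ i ∈ (Finset.range (D + 1)).filter
          (fun i => g i ≠ 0 ∧ (g i).totalDegree + i * d = M),
        homogeneousComponent M (g i * F ^ i) := by
    rw [Finset.sum_congr rfl hterm]
    unfold hatSum
    simp only [← hM]
  rw [key, hfilter, hGM]
end

section
/- Let K be a field of characteristic 0, let f_1,…,f_m ∈ K[x_1,…,x_n] be algebraically independent with d_i = deg f_i, let A = K[f_1,…,f_{m−1}], let G = Σ_i g_i f_m^i with g_i ∈ A, and set h(X) := Σ_{i : deg g_i + i·d_m maximal} ḡ_i X^i ∈ gr(A)[X]. If the k-th derivative h^{(k)}(X) is nonzero (and h^{(j)} ≠ 0 for all j ≤ k), then the analogous top-degree term of the k-th divided partial ∂^k G/∂f_m^k equals h^{(k)}(f̄_m); in particular if h'(X) ≠ 0 then the top-degree term of ∂G/∂f_m as an element of A[f_m] equals h'(f̄_m). -/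
open MvPolynomial
open Classical in
/-- The polynomial `h(X) = ∑_{i : deg g_i + i·d_m maximal} ḡ_i X^i ∈ gr(A)[X]`. -/
noncomputable def hPoly {K : Type*} [Field K] {n : ℕ} (dm : ℕ)
    (g : ℕ → MvPolynomial (Fin n) K) (D : ℕ) :
    Polynomial (MvPolynomial (Fin n) K) :=
  let M := ((Finset.range (D + 1)).filter fun i => g i ≠ 0).sup
    fun i => (g i).totalDegree + i * dm
  ∑ i ∈ (Finset.range (D + 1)).filter
      (fun i => g i ≠ 0 ∧ (g i).totalDegree + i * dm = M),
    Polynomial.C (leadTerm (g i)) * Polynomial.X ^ i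

lemma hatAux_leadTerm_ne_zero {K : Type*} [Field K] {n : ℕ} {p : MvPolynomial (Fin n) K}
    (hp : p ≠ 0) : leadTerm p ≠ 0 := by
  obtain ⟨d, hd, hdeg⟩ := p.support.exists_mem_eq_sup (support_nonempty.2 hp)
    (fun s => s.sum fun _ e => e)
  intro h
  have : coeff d (leadTerm p) = coeff d p := by
    rw [leadTerm, coeff_homogeneousComponent, if_pos]
    rw [Finsupp.degree, totalDegree, hdeg]; rfl
  rw [h, coeff_zero] at this
  exact (mem_support_iff.1 hd) this.symm

lemma hatAux_totalDegree_smul_eq {K : Type*} [Field K] {n : ℕ} {a : K} (ha : a ≠ 0)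
    (p : MvPolynomial (Fin n) K) : (a • p).totalDegree = p.totalDegree := by
  refine le_antisymm (totalDegree_smul_le a p) ?_
  conv_lhs => rw [← inv_smul_smul₀ ha p]
  exact totalDegree_smul_le a⁻¹ (a • p)

lemma hatAux_totalDegree_nsmul {K : Type*} [Field K] [CharZero K] {n : ℕ} {a : ℕ} (ha : a ≠ 0)
    (p : MvPolynomial (Fin n) K) : (a • p).totalDegree = p.totalDegree := by
  rw [← Nat.cast_smul_eq_nsmul K a p]
  exact hatAux_totalDegree_smul_eq (Nat.cast_ne_zero.2 ha) p

lemma hatAux_leadTerm_nsmul {K : Type*} [Field K] [CharZero K] {n : ℕ} {a : ℕ} (ha : a ≠ 0)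
    (p : MvPolynomial (Fin n) K) : leadTerm (a • p) = a • leadTerm p := by
  have hca : (a : K) ≠ 0 := Nat.cast_ne_zero.2 ha
  rw [← Nat.cast_smul_eq_nsmul K a p, ← Nat.cast_smul_eq_nsmul K a (leadTerm p),
    leadTerm, leadTerm, hatAux_totalDegree_smul_eq hca, map_smul]

lemma hatAux_nsmul_eq_zero_iff {K : Type*} [Field K] [CharZero K] {n : ℕ} {a : ℕ} (ha : a ≠ 0)
    (p : MvPolynomial (Fin n) K) : a • p = 0 ↔ p = 0 := by
  rw [← Nat.cast_smul_eq_nsmul K a p, smul_eq_zero]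
  simp [Nat.cast_ne_zero.2 ha]

/-- for `G = ∑ g_i f_m^i` with `g_i ∈ A = K[f₁,…,f_{m−1}]`, if the
`k`-th derivative `h^{(k)}` of `h` is nonzero (and `h^{(j)} ≠ 0` for all `j ≤ k`),
then the top-degree term of `∂^k G/∂f_m^k = ∑_i ((i+k)!/i!) g_{i+k} f_m^i`,
formed by the same recipe as `Ĝ`, equals `h^{(k)}(f̄_m)`. -/
theorem hat_iterated_partial_eq {K : Type*} [Field K] [CharZero K] {n m : ℕ}
    (f : Fin (m + 1) → MvPolynomial (Fin n) K) (hf : AlgebraicIndependent K f)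
    (g : ℕ → MvPolynomial (Fin n) K)
    (hg : ∀ i, g i ∈ Algebra.adjoin K (Set.range fun j : Fin m => f j.castSucc))
    (D : ℕ) (hD : g D ≠ 0) (hsupp : ∀ i, D < i → g i = 0) (k : ℕ)
    (hk : ∀ j ≤ k,
      Polynomial.derivative^[j] (hPoly (f (Fin.last m)).totalDegree g D) ≠ 0) :
    hatSum (f (Fin.last m)).totalDegree (leadTerm (f (Fin.last m)))
        (fun i => Nat.descFactorial (i + k) k • g (i + k)) D =
      Polynomial.eval (leadTerm (f (Fin.last m)))
        (Polynomial.derivative^[k] (hPoly (f (Fin.last m)).totalDegree g D)) := by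
  classical
  set dm := (f (Fin.last m)).totalDegree with hdm
  set fl := leadTerm (f (Fin.last m)) with hfl
  set c : ℕ → MvPolynomial (Fin n) K := fun i => Nat.descFactorial (i + k) k • g (i + k)
    with hc
  set M := ((Finset.range (D + 1)).filter fun i => g i ≠ 0).sup
    (fun i => (g i).totalDegree + i * dm) with hM
  set S := (Finset.range (D + 1)).filter
    (fun i => g i ≠ 0 ∧ (g i).totalDegree + i * dm = M) with hS
  have hdesc : ∀ i : ℕ, Nat.descFactorial (i + k) k ≠ 0 := fun i => by
    rw [Ne, Nat.descFactorial_eq_zero_iff_lt]; omega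
  have hc0 : ∀ i, c i = 0 ↔ g (i + k) = 0 := fun i =>
    hatAux_nsmul_eq_zero_iff (hdesc i) _
  have hcdeg : ∀ i, g (i + k) ≠ 0 → (c i).totalDegree = (g (i + k)).totalDegree := fun i _ =>
    hatAux_totalDegree_nsmul (hdesc i) _
  have hP : hPoly dm g D = ∑ i ∈ S, Polynomial.C (leadTerm (g i)) * Polynomial.X ^ i := by
    rw [hPoly]
  -- find j0 ∈ S with k ≤ j0
  have hj0 : ∃ j ∈ S, k ≤ j := by
    by_contra hcon
    push_neg at hcon
    refine hk k le_rfl ?_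
    rw [hP, Polynomial.iterate_derivative_sum]
    refine Finset.sum_eq_zero fun j hj => ?_
    rw [Polynomial.iterate_derivative_C_mul, Polynomial.iterate_derivative_X_pow_eq_C_mul,
      Nat.descFactorial_eq_zero_iff_lt.2 (hcon j hj)]
    simp
  obtain ⟨j0, hj0S, hkj0⟩ := hj0
  rw [hS, Finset.mem_filter, Finset.mem_range] at hj0S
  obtain ⟨hj0D, hgj0, hMj0⟩ := hj0S
  -- the sup for the shifted family
  set M' := ((Finset.range (D + 1)).filter fun i => c i ≠ 0).sup
    (fun i => (c i).totalDegree + i * dm) with hM'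
  have hmem : ∀ i, c i ≠ 0 →
      ((c i).totalDegree + i * dm) + k * dm = (g (i + k)).totalDegree + (i + k) * dm := by
    intro i hci
    have hgi := (not_iff_not.2 (hc0 i)).1 hci
    rw [hcdeg i hgi, Nat.add_mul]; ring
  have hj0mul : (j0 - k) * dm + k * dm = j0 * dm := by
    rw [← Nat.add_mul]; congr 1; omega
  have hiD : ∀ i, g (i + k) ≠ 0 → i + k ≤ D := by
    intro i hgi
    by_contra hcon
    exact hgi (hsupp (i + k) (by omega))
  have hj0k : j0 - k + k = j0 := Nat.sub_add_cancel hkj0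
  have hcj0 : c (j0 - k) ≠ 0 := by
    rw [Ne, hc0, hj0k]; exact hgj0
  have hj0mem : j0 - k ∈ (Finset.range (D + 1)).filter fun i => c i ≠ 0 := by
    rw [Finset.mem_filter, Finset.mem_range]
    exact ⟨by omega, hcj0⟩
  have hMk : k * dm ≤ M := by
    rw [← hMj0]
    have : k * dm ≤ j0 * dm := Nat.mul_le_mul_right dm hkj0
    omega
  have hM'le : ∀ i ∈ (Finset.range (D + 1)).filter fun i => c i ≠ 0,
      (c i).totalDegree + i * dm ≤ M - k * dm := by
    intro i hi
    rw [Finset.mem_filter, Finset.mem_range] at hi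
    obtain ⟨hiD', hci⟩ := hi
    have hgi := (not_iff_not.2 (hc0 i)).1 hci
    have h1 : (g (i + k)).totalDegree + (i + k) * dm ≤ M := by
      rw [hM]
      exact Finset.le_sup (f := fun i => (g i).totalDegree + i * dm)
        (Finset.mem_filter.2 ⟨Finset.mem_range.2 (by have := hiD _ hgi; omega), hgi⟩)
    have h2 := hmem i hci
    omega
  have hMM' : M' + k * dm = M := by
    refine le_antisymm ?_ ?_
    · have := Finset.sup_le hM'le
      rw [← hM'] at this
      omega
    · have h1 : (c (j0 - k)).totalDegree + (j0 - k) * dm ≤ M' :=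
        Finset.le_sup (f := fun i => (c i).totalDegree + i * dm) hj0mem
      have h2 := hmem (j0 - k) hcj0
      rw [hj0k] at h2
      omega
  -- characterize the index set of hatSum
  have hsetiff : ∀ i, (i ∈ (Finset.range (D + 1)).filter
        (fun i => c i ≠ 0 ∧ (c i).totalDegree + i * dm = M')) ↔
      (i + k ∈ S ∧ k ≤ i + k) := by
    intro i
    rw [Finset.mem_filter, Finset.mem_range, hS, Finset.mem_filter, Finset.mem_range]
    constructor
    · rintro ⟨hiD', hci, hdeg⟩
      have hgi := (not_iff_not.2 (hc0 i)).1 hci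
      have h2 := hmem i hci
      refine ⟨⟨by have := hiD _ hgi; omega, hgi, by omega⟩, Nat.le_add_left k i⟩
    · rintro ⟨⟨hikD, hgi, hdeg⟩, -⟩
      have hci : c i ≠ 0 := (not_iff_not.2 (hc0 i)).2 hgi
      have h2 := hmem i hci
      exact ⟨by have := hiD _ hgi; omega, hci, by omega⟩
  -- LHS
  have hL : hatSum dm fl c D =
      ∑ j ∈ S.filter (fun j => k ≤ j),
        Nat.descFactorial j k • (leadTerm (g j) * fl ^ (j - k)) := by
    rw [hatSum]
    rw [← hM']  -- make the let variable match
    refine Finset.sum_nbij' (fun i => i + k) (fun j => j - k) ?_ ?_ ?_ ?_ ?_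
    · intro i hi
      rw [Finset.mem_filter]
      exact ((hsetiff i).1 hi).imp id (fun h => h)
    · intro j hj
      rw [Finset.mem_filter] at hj
      obtain ⟨hjS, hkj⟩ := hj
      refine (hsetiff (j - k)).2 ?_
      rw [Nat.sub_add_cancel hkj]
      exact ⟨hjS, hkj⟩
    · intro i _; show i + k - k = i; omega
    · intro j hj
      rw [Finset.mem_filter] at hj
      show j - k + k = j; omega
    · intro i hi
      show leadTerm (Nat.descFactorial (i + k) k • g (i + k)) * fl ^ i =
        Nat.descFactorial (i + k) k • (leadTerm (g (i + k)) * fl ^ (i + k - k))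
      rw [hatAux_leadTerm_nsmul (hdesc i) (g (i + k)), Nat.add_sub_cancel, smul_mul_assoc]
  -- RHS
  have hR : Polynomial.eval fl (Polynomial.derivative^[k] (hPoly dm g D)) =
      ∑ j ∈ S, Nat.descFactorial j k • (leadTerm (g j) * fl ^ (j - k)) := by
    rw [hP, Polynomial.iterate_derivative_sum, Polynomial.eval_finset_sum]
    refine Finset.sum_congr rfl fun j _ => ?_
    rw [Polynomial.iterate_derivative_C_mul, Polynomial.iterate_derivative_X_pow_eq_smul]
    simp only [Polynomial.eval_mul, Polynomial.eval_smul, Polynomial.eval_pow,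
      Polynomial.eval_C, Polynomial.eval_X, smul_eq_mul, nsmul_eq_mul]
    push_cast
    ring
  rw [hL, hR]
  exact Finset.sum_filter_of_ne fun j _ hne => by
    by_contra hlt
    push_neg at hlt
    exact hne (by rw [Nat.descFactorial_eq_zero_iff_lt.2 hlt, zero_smul])
end
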